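/- The double integral ∫₀¹∫₀¹ √(u² + v²) · 4(1−u)(1−v) du dv equals (2 + √2 + 5·ln(1 + √2))/15. -/

import Mathlib

/-!
The integral is the mean distance between two independent uniform points of the unit square,
`2 (1 - u)` being the density of the distance between two uniform points of `[0, 1]`.

Both integrations are done with elementary primitives. In `u`, `√(u² + v²)` integrates to
`(u √(u² + v²) + v² arsinh (u / v)) / 2`, which leaves the term `v² arsinh (1 / v)` in the
integrand in `v`. It and its primitive stay continuous at `v = 0` because
`v arsinh (1 / v) = v log (1 + √(v² + 1)) - v log v` and `v log v → 0`.
-/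

open MeasureTheory Real

namespace Real

theorem arsinh_inv_of_pos {t : ℝ} (ht : 0 < t) :
    arsinh t⁻¹ = log (1 + √(t ^ 2 + 1)) - log t := by
  have hroot : √(1 + t⁻¹ ^ 2) = √(t ^ 2 + 1) / t := by
    rw [show 1 + t⁻¹ ^ 2 = (t ^ 2 + 1) / t ^ 2 by field_simp,
      sqrt_div' _ (sq_nonneg t), sqrt_sq ht.le]
  rw [arsinh, hroot, ← log_div (by positivity) ht.ne']
  congr 1
  field_simp

/-- At `t = 0` the junk value `arsinh 0⁻¹ = 0` agrees with the limit. -/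
theorem continuous_mul_arsinh_inv : Continuous fun t : ℝ => t * arsinh t⁻¹ := by
  have h : (fun t : ℝ => t * arsinh t⁻¹) =
      fun t => |t| * log (1 + √(t ^ 2 + 1)) - |t| * log |t| := by
    ext t
    rcases lt_trichotomy t 0 with ht | rfl | ht
    · have := arsinh_inv_of_pos (neg_pos.mpr ht)
      rw [inv_neg, arsinh_neg, neg_sq] at this
      rw [abs_of_neg ht]
      linear_combination (-t) * this
    · simp
    · rw [abs_of_pos ht, arsinh_inv_of_pos ht]
      ring
  rw [h]
  have hlog : Continuous fun t : ℝ => log (1 + √(t ^ 2 + 1)) :=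
    (by fun_prop : Continuous fun t : ℝ => 1 + √(t ^ 2 + 1)).log fun t => by positivity
  exact (continuous_abs.mul hlog).sub continuous_abs.mul_log

theorem hasDerivAt_sqrt_sq_add {c : ℝ} (hc : 0 < c) (x : ℝ) :
    HasDerivAt (fun x => √(x ^ 2 + c)) (x / √(x ^ 2 + c)) x := by
  have h := ((hasDerivAt_pow 2 x).add_const c).sqrt (by positivity)
  refine h.congr_deriv ?_
  field_simp
  norm_num

theorem hasDerivAt_arsinh_div {a : ℝ} (ha : 0 < a) (x : ℝ) :
    HasDerivAt (fun x => arsinh (x / a)) (√(x ^ 2 + a ^ 2))⁻¹ x := by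
  have h : HasDerivAt (arsinh ∘ fun x => x / a) ((√(1 + (x / a) ^ 2))⁻¹ * (1 / a)) x :=
    (hasDerivAt_arsinh (x / a)).comp x ((hasDerivAt_id' x).div_const a)
  refine h.congr_deriv ?_
  rw [show 1 + (x / a) ^ 2 = (x ^ 2 + a ^ 2) / a ^ 2 by field_simp; ring,
    sqrt_div' _ (sq_nonneg a), sqrt_sq ha.le]
  field_simp

theorem hasDerivAt_arsinh_inv {x : ℝ} (hx : 0 < x) :
    HasDerivAt (fun x => arsinh x⁻¹) (-(x * √(x ^ 2 + 1))⁻¹) x := by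
  have h : HasDerivAt (arsinh ∘ Inv.inv) ((√(1 + x⁻¹ ^ 2))⁻¹ * -(x ^ 2)⁻¹) x :=
    (hasDerivAt_arsinh x⁻¹).comp x (hasDerivAt_inv hx.ne')
  refine h.congr_deriv ?_
  rw [show 1 + x⁻¹ ^ 2 = (x ^ 2 + 1) / x ^ 2 by field_simp,
    sqrt_div' _ (sq_nonneg x), sqrt_sq hx.le]
  field_simp

end Real

theorem hasDerivAt_inner_primitive {v : ℝ} (hv : 0 < v) (u : ℝ) :
    HasDerivAt (fun u => 4 * (1 - v) *
        ((u * √(u ^ 2 + v ^ 2) + v ^ 2 * arsinh (u / v)) / 2 - √(u ^ 2 + v ^ 2) ^ 3 / 3))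
      (√(u ^ 2 + v ^ 2) * (4 * (1 - u) * (1 - v))) u := by
  have hs := hasDerivAt_sqrt_sq_add (pow_pos hv 2) u
  have h := (((((hasDerivAt_id' u).mul hs).add
    ((hasDerivAt_arsinh_div hv u).const_mul (v ^ 2))).div_const 2).sub
    ((hs.pow 3).div_const 3)).const_mul (4 * (1 - v))
  refine h.congr_deriv ?_
  have hpos : 0 < √(u ^ 2 + v ^ 2) := sqrt_pos.mpr (by positivity)
  have hsq : √(u ^ 2 + v ^ 2) ^ 2 = u ^ 2 + v ^ 2 := sq_sqrt (by positivity)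
  field_simp
  linear_combination 3 * (v - 1) * hsq

noncomputable def innerIntegral (v : ℝ) : ℝ :=
  4 * (1 - v) * ((√(v ^ 2 + 1) + v ^ 2 * arsinh v⁻¹) / 2 - √(v ^ 2 + 1) ^ 3 / 3 + v ^ 3 / 3)

theorem integral_eq_innerIntegral {v : ℝ} (hv : 0 < v) :
    ∫ u in Set.Icc (0 : ℝ) 1, √(u ^ 2 + v ^ 2) * (4 * (1 - u) * (1 - v)) =
      innerIntegral v := by
  rw [integral_Icc_eq_integral_Ioc, ← intervalIntegral.integral_of_le zero_le_one,
    intervalIntegral.integral_eq_sub_of_hasDerivAt (fun u _ => hasDerivAt_inner_primitive hv u)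
      (Continuous.intervalIntegrable (by fun_prop) 0 1)]
  simp [innerIntegral, sqrt_sq hv.le, add_comm (1 : ℝ)]
  ring

/-- A termwise primitive of `innerIntegral`, simplified with `√(v² + 1)² = v² + 1`. -/
noncomputable def outerPrimitive (v : ℝ) : ℝ :=
  arsinh v / 6 + √(v ^ 2 + 1) * (8 * v ^ 4 - 10 * v ^ 3 - 9 * v ^ 2 + 15 * v - 2) / 30
    + v * (4 - 3 * v) / 6 * (v ^ 2 * arsinh v⁻¹) + v ^ 4 / 3 - 4 * v ^ 5 / 15

theorem continuous_sq_mul_arsinh_inv : Continuous fun t : ℝ => t ^ 2 * arsinh t⁻¹ :=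
  (continuous_id.mul continuous_mul_arsinh_inv).congr fun t => by
    simp only [Pi.mul_apply, id]; ring

theorem continuous_innerIntegral : Continuous innerIntegral := by
  have := continuous_sq_mul_arsinh_inv
  unfold innerIntegral
  fun_prop

theorem continuous_outerPrimitive : Continuous outerPrimitive := by
  have := continuous_sq_mul_arsinh_inv
  exact ((((continuous_arsinh.div_const 6).add (by fun_prop)).add (by fun_prop)).add
    (by fun_prop)).sub (by fun_prop)

theorem hasDerivAt_outerPrimitive {v : ℝ} (hv : 0 < v) :
    HasDerivAt outerPrimitive (innerIntegral v) v := by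
  have hs := hasDerivAt_sqrt_sq_add one_pos v
  have hp : HasDerivAt (fun v : ℝ => 8 * v ^ 4 - 10 * v ^ 3 - 9 * v ^ 2 + 15 * v - 2)
      (32 * v ^ 3 - 30 * v ^ 2 - 18 * v + 15) v := by
    have := (((((hasDerivAt_pow 4 v).const_mul 8).sub ((hasDerivAt_pow 3 v).const_mul 10)).sub
      ((hasDerivAt_pow 2 v).const_mul 9)).add ((hasDerivAt_id' v).const_mul 15)).sub_const 2
    refine this.congr_deriv ?_
    norm_num
    ring
  have hq : HasDerivAt (fun v : ℝ => v * (4 - 3 * v) / 6) ((4 - 6 * v) / 6) v := by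
    have := ((hasDerivAt_id' v).mul (((hasDerivAt_id' v).const_mul 3).const_sub 4)).div_const 6
    refine this.congr_deriv ?_
    ring
  have h := ((((hasDerivAt_arsinh v).div_const 6).add ((hs.mul hp).div_const 30)).add
    (hq.mul ((hasDerivAt_pow 2 v).mul (hasDerivAt_arsinh_inv hv)))).add
    ((hasDerivAt_pow 4 v).div_const 3) |>.sub (((hasDerivAt_pow 5 v).const_mul 4).div_const 15)
  refine h.congr_deriv ?_
  have hpos : 0 < √(v ^ 2 + 1) := sqrt_pos.mpr (by positivity)
  have hsq : √(v ^ 2 + 1) ^ 2 = v ^ 2 + 1 := sq_sqrt (by positivity)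
  rw [add_comm 1 (v ^ 2)]
  have hcube : √(v ^ 2 + 1) ^ 3 = √(v ^ 2 + 1) * (v ^ 2 + 1) := by rw [pow_succ, hsq, mul_comm]
  simp only [innerIntegral, hcube, Pi.mul_apply]
  norm_num
  field_simp
  linear_combination 540 * (10 * v ^ 2 + 2 * v - 8 * v ^ 3 - 5) * hsq

theorem outerPrimitive_one_sub_zero :
    outerPrimitive 1 - outerPrimitive 0 = (2 + √2 + 5 * log (1 + √2)) / 15 := by
  have harsinh : arsinh 1 = log (1 + √2) := by norm_num [arsinh]
  norm_num [outerPrimitive, harsinh]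
  ring

/-- `∫₀¹∫₀¹ √(u²+v²) · 4(1-u)(1-v) du dv = (2 + √2 + 5 ln(1+√2))/15`. -/
theorem double_integral_value :
    (∫ v in Set.Icc (0:ℝ) 1, ∫ u in Set.Icc (0:ℝ) 1,
        Real.sqrt (u ^ 2 + v ^ 2) * (4 * (1 - u) * (1 - v)))
    = (2 + Real.sqrt 2 + 5 * Real.log (1 + Real.sqrt 2)) / 15 := by
  rw [integral_Icc_eq_integral_Ioc,
    setIntegral_congr_fun measurableSet_Ioc fun v hv => integral_eq_innerIntegral hv.1,
    ← intervalIntegral.integral_of_le zero_le_one,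
    intervalIntegral.integral_eq_sub_of_hasDeriv_right_of_le zero_le_one
      continuous_outerPrimitive.continuousOn
      (fun v hv => (hasDerivAt_outerPrimitive hv.1).hasDerivWithinAt)
      (continuous_innerIntegral.intervalIntegrable 0 1)]
  exact outerPrimitive_one_sub_zero
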